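/- arXiv:1109.3547 — 2 statements merged into one kernel-verified Lean document; each statement's English description precedes it below -/
import Mathlib

section
/- (Repeated visits to the bottom state.) Let m ≥ 2 be an integer and let (X_t)_{t≥1} be a stochastic process on a probability space, adapted to a filtration (F_t), taking values in {1, …, m}, such that for constants c₁ ∈ (0,1) and c₂ ∈ (0,1) and for every t ≥ 1, almost surely Pr[X_{t+1} ≤ c₁·X_t | F_t] ≥ 1 − X_t^{−c₂} on the event {X_t > 1} (after each visit to the state 1 the process may move to an arbitrary state in {1, …, m}). Then there exists a constant K (depending only on c₁ and c₂) such that for every positive integer k and all sufficiently large m, with probability at least 1 − k·m^{−4} the process visits the state 1 at least k times within the first K·k·(log m)² steps. -/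
/-!
A step from a state `x > 1` is *good* if it lands at or below `c₁ x`; by the drift hypothesis it
fails with probability at most `x^(-c₂)`. After `L ≈ log m / log (1/c₁)` good steps in a row any
state `x ≤ m` has reached `1`, and since the failure probabilities along such a descent decay
geometrically, it succeeds with probability at least `δ > 0` independent of `m`, whatever the past.
A window of `N (L + 1)` steps holds `N` such attempts, so it avoids `1` with probability at most
`(1 - δ)^N ≤ m^(-4)` once `N ≈ 4 log m / log (1/(1-δ))`. The first `k N (L + 1) = O(k (log m)^2)`
steps split into `k` windows, and a union bound over them gives the theorem.
-/

open MeasureTheory Real Finset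

theorem exp_neg_le_prod_one_sub_mul_pow {η ρ : ℝ} (hη0 : 0 ≤ η) (hη1 : η < 1) (hρ0 : 0 ≤ ρ)
    (hρ1 : ρ < 1) (n : ℕ) :
    exp (-(η / ((1 - ρ) * (1 - η)))) ≤ ∏ j ∈ range n, (1 - η * ρ ^ j) := by
  have hterm (j : ℕ) : exp (-(η * ρ ^ j / (1 - η))) ≤ 1 - η * ρ ^ j := by
    set a := η * ρ ^ j
    have ha0 : 0 ≤ a := by positivity
    have haη : a ≤ η := mul_le_of_le_one_right hη0 (pow_le_one₀ hρ0 hρ1.le)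
    have hlog : -(a / (1 - η)) ≤ log (1 - a) :=
      calc -(a / (1 - η)) ≤ -(a / (1 - a)) := by gcongr
        _ = 1 - (1 - a)⁻¹ := by field_simp [show 1 - a ≠ 0 by linarith]; ring
        _ ≤ log (1 - a) := one_sub_inv_le_log_of_pos (by linarith)
    calc exp (-(a / (1 - η))) ≤ exp (log (1 - a)) := exp_le_exp.2 hlog
      _ = 1 - a := exp_log (by linarith)
  have hsum : ∑ j ∈ range n, η * ρ ^ j ≤ η / (1 - ρ) := by
    rw [← mul_sum, range_eq_Ico, div_eq_mul_one_div]
    gcongr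
    simpa using geom_sum_Ico_le_of_lt_one (m := 0) (n := n) hρ0 hρ1
  calc exp (-(η / ((1 - ρ) * (1 - η))))
      ≤ exp (∑ j ∈ range n, -(η * ρ ^ j / (1 - η))) := by
        rw [exp_le_exp, sum_neg_distrib, ← sum_div, ← div_div]
        gcongr
    _ = ∏ j ∈ range n, exp (-(η * ρ ^ j / (1 - η))) := exp_sum _ _
    _ ≤ ∏ j ∈ range n, (1 - η * ρ ^ j) :=
        prod_le_prod (fun _ _ => (exp_pos _).le) (fun j _ => hterm j)

theorem rpow_neg_le_of_two_le_mul_pow {x c₁ c₂ : ℝ} {n : ℕ} (hc₁ : 0 < c₁) (hc₂ : 0 ≤ c₂)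
    (hx : 2 ≤ x * c₁ ^ n) : x ^ (-c₂) ≤ 2 ^ (-c₂) * (c₁ ^ c₂) ^ n := by
  have hcn : 0 < c₁ ^ n := by positivity
  have hx0 : 0 < x := by nlinarith
  calc x ^ (-c₂) = (x * c₁ ^ n) ^ (-c₂) * (c₁ ^ n) ^ c₂ := by
        rw [mul_rpow hx0.le hcn.le, mul_assoc, ← rpow_add hcn, neg_add_cancel, rpow_zero, mul_one]
    _ ≤ 2 ^ (-c₂) * (c₁ ^ c₂) ^ n := by
        rw [rpow_pow_comm hc₁.le]
        exact mul_le_mul_of_nonneg_right (rpow_le_rpow_of_nonpos two_pos hx (by linarith))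
          (by positivity)

theorem exists_pow_le_exp_neg_mul {r : ℝ} (hr0 : 0 < r) (hr1 : r < 1) {a : ℝ} (ha : 0 ≤ a) :
    ∃ C > 0, ∀ ℓ : ℝ, 1 ≤ ℓ → ∃ N : ℕ, (N : ℝ) ≤ C * ℓ ∧ r ^ N ≤ exp (-(a * ℓ)) := by
  set β := -log r
  have hβ : 0 < β := neg_pos.2 (log_neg hr0 hr1)
  refine ⟨a / β + 1, by positivity, fun ℓ hℓ => ⟨⌈a * ℓ / β⌉₊, ?_, ?_⟩⟩
  · have := Nat.ceil_lt_add_one (show 0 ≤ a * ℓ / β by positivity)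
    have : a * ℓ / β = a / β * ℓ := by ring
    nlinarith
  · have hN : a * ℓ ≤ ⌈a * ℓ / β⌉₊ * β := (div_le_iff₀ hβ).1 (Nat.le_ceil _)
    rw [← exp_log hr0, ← exp_nat_mul, exp_le_exp]
    linarith

/-- A state `y` with `y c₁^j ≥ 2` takes a good step except with probability
`y^(-c₂) ≤ 2^(-c₂) (c₁^c₂)^j`; the product bounds the chance of reaching `1` within `n` steps from a
state `x` with `x c₁^n < 2`. -/
noncomputable def descentProb (c₁ c₂ : ℝ) (n : ℕ) : ℝ :=
  ∏ j ∈ range n, (1 - 2 ^ (-c₂) * (c₁ ^ c₂) ^ j)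

section DescentProb

variable {c₁ c₂ : ℝ}

theorem two_rpow_neg_mul_rpow_pow_le_one (hc₁ : 0 ≤ c₁) (hc₁' : c₁ ≤ 1) (hc₂ : 0 ≤ c₂)
    (j : ℕ) : 2 ^ (-c₂) * (c₁ ^ c₂) ^ j ≤ 1 :=
  mul_le_one₀ (rpow_le_one_of_one_le_of_nonpos one_le_two (by linarith)) (by positivity)
    (pow_le_one₀ (by positivity) (rpow_le_one hc₁ hc₁' hc₂))

theorem descentProb_nonneg (hc₁ : 0 ≤ c₁) (hc₁' : c₁ ≤ 1) (hc₂ : 0 ≤ c₂) (n : ℕ) :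
    0 ≤ descentProb c₁ c₂ n :=
  prod_nonneg fun j _ => sub_nonneg.2 (two_rpow_neg_mul_rpow_pow_le_one hc₁ hc₁' hc₂ j)

theorem descentProb_le_one (hc₁ : 0 ≤ c₁) (hc₁' : c₁ ≤ 1) (hc₂ : 0 ≤ c₂) (n : ℕ) :
    descentProb c₁ c₂ n ≤ 1 :=
  prod_le_one (fun j _ => sub_nonneg.2 (two_rpow_neg_mul_rpow_pow_le_one hc₁ hc₁' hc₂ j))
    fun j _ => sub_le_self _ (by positivity)

end DescentProb

theorem le_card_filter_Ico_of_forall_exists {p : ℕ → Prop} [DecidablePred p] {a D : ℕ} :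
    ∀ {k : ℕ}, (∀ j < k, ∃ u ∈ Ico (a + j * D) (a + j * D + D), p u) →
      k ≤ ((Ico a (a + k * D)).filter p).card
  | 0, _ => Nat.zero_le _
  | k + 1, h => by
    rw [add_one_mul, ← add_assoc,
      ← Ico_union_Ico_eq_Ico (Nat.le_add_right _ _) (Nat.le_add_right _ _), filter_union,
      card_union_of_disjoint (disjoint_filter_filter (Ico_disjoint_Ico_consecutive _ _ _))]
    obtain ⟨u, hu, hpu⟩ := h k (Nat.lt_add_one k)
    have hlast : 0 < ((Ico (a + k * D) (a + k * D + D)).filter p).card :=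
      card_pos.2 ⟨u, mem_filter.2 ⟨hu, hpu⟩⟩
    have := le_card_filter_Ico_of_forall_exists (k := k) fun j hj => h j (by omega)
    omega

theorem measureReal_diff_le_of_condExp_indicator_ge {Ω : Type*} {m m0 : MeasurableSpace Ω}
    {μ : Measure Ω} [IsFiniteMeasure μ] (hm : m ≤ m0) {A S : Set Ω} (hA : MeasurableSet[m] A)
    (hS : MeasurableSet S) {q : ℝ}
    (h : ∀ᵐ ω ∂μ, ω ∈ A → 1 - q ≤ μ[S.indicator (fun _ => (1 : ℝ)) | m] ω) :
    μ.real (A \ S) ≤ q * μ.real A := by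
  have hint : ∫ ω in A, μ[S.indicator (fun _ => (1 : ℝ)) | m] ω ∂μ = μ.real (A ∩ S) := by
    rw [setIntegral_condExp hm ((integrable_const 1).indicator hS) hA, setIntegral_indicator hS]
    simp
  have hlow : (1 - q) * μ.real A ≤ ∫ ω in A, μ[S.indicator (fun _ => (1 : ℝ)) | m] ω ∂μ :=
    calc (1 - q) * μ.real A = ∫ _ in A, (1 - q) ∂μ := by simp [mul_comm]
      _ ≤ _ := setIntegral_mono_ae_restrict (integrableOn_const (measure_ne_top μ A))
          integrable_condExp.integrableOn ((ae_restrict_iff' (hm A hA)).2 h)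
  have hsplit := measureReal_inter_add_sdiff (μ := μ) (s := A) hS
  linarith

section Drift

variable {Ω : Type*} {m0 : MeasurableSpace Ω}

theorem ofReal_one_sub_le_of_measureReal_compl_le {μ : Measure Ω} [IsProbabilityMeasure μ]
    {s : Set Ω} {p : ℝ} (h : μ.real sᶜ ≤ p) :
    ENNReal.ofReal (1 - p) ≤ μ s := by
  have hcover : 1 ≤ μ.real s + μ.real sᶜ := by
    simpa [Set.union_compl_self] using measureReal_union_le (μ := μ) s sᶜ
  rw [← ofReal_measureReal]
  exact ENNReal.ofReal_le_ofReal (by linarith)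

def noVisit (X : ℕ → Ω → ℕ) (s n : ℕ) : Set Ω := {ω | ∀ u ∈ Ico s (s + n), X u ω ≠ 1}

theorem noVisit_subset_noVisit {X : ℕ → Ω → ℕ} {s n s' n' : ℕ} (hs : s ≤ s')
    (hn : s' + n' ≤ s + n) : noVisit X s n ⊆ noVisit X s' n' := fun _ hω u hu =>
  hω u (mem_Ico.2 ⟨hs.trans (mem_Ico.1 hu).1, (mem_Ico.1 hu).2.trans_le hn⟩)

theorem measurableSet_noVisit {ℱ : Filtration ℕ m0} {X : ℕ → Ω → ℕ}
    (hX : ∀ t, 1 ≤ t → Measurable[ℱ t] (X t)) {s : ℕ} (hs : 1 ≤ s) (n : ℕ) :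
    MeasurableSet[ℱ (s + n)] (noVisit X s n) := by
  simp only [noVisit, Set.ofPred_forall]
  refine Finset.measurableSet_biInter _ fun u hu => ?_
  have hu := mem_Ico.1 hu
  exact ℱ.mono hu.2.le _ ((hX u (hs.trans hu.1)) (measurableSet_singleton 1).compl)

theorem inter_noVisit_one_eq_empty {X : ℕ → Ω → ℕ} {A : Set Ω} {s : ℕ}
    (h : ∀ ω ∈ A, X s ω = 1) : A ∩ noVisit X s 1 = ∅ :=
  Set.eq_empty_of_forall_notMem fun ω ⟨hωA, hω⟩ => hω s (by simp) (h ω hωA)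

theorem inter_noVisit_subset_union {X : ℕ → Ω → ℕ} (A T S : Set Ω) (s n : ℕ) :
    A ∩ noVisit X s (n + 2) ⊆ (A ∩ T ∩ noVisit X s (n + 1)) ∪ ((A \ T) \ S) ∪
      ((A \ T) ∩ S ∩ noVisit X (s + 1) (n + 1)) := by
  rintro ω ⟨hωA, hω⟩
  by_cases hωT : ω ∈ T
  · exact .inl (.inl ⟨⟨hωA, hωT⟩, noVisit_subset_noVisit le_rfl (by omega) hω⟩)
  by_cases hωS : ω ∈ S
  · exact .inr ⟨⟨⟨hωA, hωT⟩, hωS⟩, noVisit_subset_noVisit (by omega) (by omega) hω⟩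
  · exact .inl (.inr ⟨⟨hωA, hωT⟩, hωS⟩)

def HasMultiplicativeDrift (μ : Measure Ω) (ℱ : Filtration ℕ m0) (X : ℕ → Ω → ℕ) (c₁ c₂ : ℝ) :
    Prop :=
  ∀ t : ℕ, 1 ≤ t → ∀ᵐ ω ∂μ, 1 < X t ω →
    1 - (X t ω : ℝ) ^ (-c₂) ≤
      (μ[Set.indicator {ω' : Ω | (X (t + 1) ω' : ℝ) ≤ c₁ * (X t ω' : ℝ)}
          (fun _ => (1 : ℝ)) | ℱ t]) ω

variable {μ : Measure Ω} [IsFiniteMeasure μ] {ℱ : Filtration ℕ m0} {X : ℕ → Ω → ℕ} {c₁ c₂ : ℝ}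

theorem measurableSet_drop (hX : ∀ t, 1 ≤ t → Measurable[ℱ t] (X t)) {s : ℕ} (hs : 1 ≤ s) :
    MeasurableSet[ℱ (s + 1)] {ω | (X (s + 1) ω : ℝ) ≤ c₁ * X s ω} :=
  measurableSet_le (measurable_from_nat.comp (hX (s + 1) (by omega)))
    ((measurable_from_nat.comp ((hX s hs).mono (ℱ.mono s.le_succ) le_rfl)).const_mul c₁)

theorem HasMultiplicativeDrift.measureReal_diff_drop_le (hD : HasMultiplicativeDrift μ ℱ X c₁ c₂)
    (hX : ∀ t, 1 ≤ t → Measurable[ℱ t] (X t)) {s : ℕ} (hs : 1 ≤ s) {A : Set Ω}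
    (hA : MeasurableSet[ℱ s] A) {q : ℝ} (hq : ∀ ω ∈ A, 1 < X s ω ∧ (X s ω : ℝ) ^ (-c₂) ≤ q) :
    μ.real (A \ {ω | (X (s + 1) ω : ℝ) ≤ c₁ * X s ω}) ≤ q * μ.real A := by
  refine measureReal_diff_le_of_condExp_indicator_ge (ℱ.le s) hA
    (ℱ.le _ _ (measurableSet_drop hX hs)) ?_
  filter_upwards [hD s hs] with ω hω hωA
  linarith [hω (hq ω hωA).1, (hq ω hωA).2]

theorem HasMultiplicativeDrift.measureReal_inter_noVisit_le
    (hD : HasMultiplicativeDrift μ ℱ X c₁ c₂) (hX : ∀ t, 1 ≤ t → Measurable[ℱ t] (X t))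
    (hX1 : ∀ t, 1 ≤ t → ∀ ω, 1 ≤ X t ω) (hc₁ : 0 < c₁) (hc₁' : c₁ ≤ 1) (hc₂ : 0 ≤ c₂) (n : ℕ) :
    ∀ {s : ℕ}, 1 ≤ s → ∀ {A : Set Ω}, MeasurableSet[ℱ s] A →
      (∀ ω ∈ A, (X s ω : ℝ) * c₁ ^ n < 2) →
      μ.real (A ∩ noVisit X s (n + 1)) ≤ (1 - descentProb c₁ c₂ n) * μ.real A := by
  induction n with
  | zero =>
    intro s hs A _ hAx
    have hbottom (ω : Ω) (hω : ω ∈ A) : X s ω = 1 := by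
      have hlt : (X s ω : ℝ) < 2 := by simpa using hAx ω hω
      have := hX1 s hs ω
      have : X s ω < 2 := by exact_mod_cast hlt
      omega
    simp [inter_noVisit_one_eq_empty hbottom, descentProb]
  | succ n ih =>
    intro s hs A hA hAx
    set g := descentProb c₁ c₂ n
    set ε : ℝ := 2 ^ (-c₂) * (c₁ ^ c₂) ^ n
    -- Either `X s` is already small enough for `n` good steps (`T`), or the first step is good
    -- (`S`) except with probability `ε` and lands in a state small enough for `n` good steps.
    set T := {ω | (X s ω : ℝ) * c₁ ^ n < 2}
    set S := {ω | (X (s + 1) ω : ℝ) ≤ c₁ * X s ω}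
    have hT : MeasurableSet[ℱ s] T :=
      measurableSet_lt ((measurable_from_nat.comp (hX s hs)).mul_const _) measurable_const
    have hS : MeasurableSet[ℱ (s + 1)] S := measurableSet_drop hX hs
    have hA₂ : MeasurableSet[ℱ s] (A \ T) := hA.diff hT
    have h₁ : μ.real (A ∩ T ∩ noVisit X s (n + 1)) ≤ (1 - g) * μ.real (A ∩ T) :=
      ih hs (hA.inter hT) fun ω hω => hω.2
    have h₂ : μ.real ((A \ T) \ S) ≤ ε * μ.real (A \ T) := by
      refine hD.measureReal_diff_drop_le hX hs hA₂ fun ω hω => ?_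
      have hx : 2 ≤ (X s ω : ℝ) * c₁ ^ n := not_lt.1 hω.2
      have hxX : (X s ω : ℝ) * c₁ ^ n ≤ X s ω :=
        mul_le_of_le_one_right (Nat.cast_nonneg _) (pow_le_one₀ hc₁.le hc₁')
      refine ⟨?_, rpow_neg_le_of_two_le_mul_pow hc₁ hc₂ hx⟩
      exact_mod_cast (one_lt_two.trans_le (hx.trans hxX))
    have h₃ : μ.real ((A \ T) ∩ S ∩ noVisit X (s + 1) (n + 1)) ≤
        (1 - g) * μ.real ((A \ T) ∩ S) := by
      refine ih (by omega) ((ℱ.mono s.le_succ _ hA₂).inter hS) fun ω hω => ?_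
      calc (X (s + 1) ω : ℝ) * c₁ ^ n ≤ c₁ * X s ω * c₁ ^ n := by gcongr; exact hω.2
        _ = X s ω * c₁ ^ (n + 1) := by ring
        _ < 2 := hAx ω hω.1.1
    have hsplitA := measureReal_inter_add_sdiff (μ := μ) (s := A) (ℱ.le s _ hT)
    have hsplitA₂ := measureReal_inter_add_sdiff (μ := μ) (s := A \ T) (ℱ.le _ _ hS)
    have hg : 0 ≤ g := descentProb_nonneg hc₁.le hc₁' hc₂ n
    have hε : 0 ≤ ε := by positivity
    calc μ.real (A ∩ noVisit X s (n + 1 + 1))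
        ≤ μ.real (A ∩ T ∩ noVisit X s (n + 1)) + μ.real ((A \ T) \ S) +
            μ.real ((A \ T) ∩ S ∩ noVisit X (s + 1) (n + 1)) :=
          (measureReal_mono (inter_noVisit_subset_union A T S s n)).trans
            ((measureReal_union_le _ _).trans (add_le_add_left (measureReal_union_le _ _) _))
      _ ≤ (1 - g * (1 - ε)) * μ.real A := by
          rw [eq_sub_of_add_eq hsplitA₂] at h₃
          rw [← hsplitA]
          nlinarith [mul_le_mul_of_nonneg_left h₂ hg,
            mul_nonneg (mul_nonneg hg hε) (measureReal_nonneg (μ := μ) (s := A ∩ T))]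
      _ = (1 - descentProb c₁ c₂ (n + 1)) * μ.real A := by
          rw [descentProb, prod_range_succ]
          rfl

theorem HasMultiplicativeDrift.measureReal_inter_noVisit_le_pow
    (hD : HasMultiplicativeDrift μ ℱ X c₁ c₂) (hX : ∀ t, 1 ≤ t → Measurable[ℱ t] (X t)) {m : ℕ}
    (hXm : ∀ t, 1 ≤ t → ∀ ω, 1 ≤ X t ω ∧ X t ω ≤ m) (hc₁ : 0 < c₁) (hc₁' : c₁ ≤ 1)
    (hc₂ : 0 ≤ c₂) {L : ℕ} (hL : (m : ℝ) * c₁ ^ L < 2) (N : ℕ) :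
    ∀ {s : ℕ}, 1 ≤ s → ∀ {A : Set Ω}, MeasurableSet[ℱ s] A →
      μ.real (A ∩ noVisit X s (N * (L + 1))) ≤ (1 - descentProb c₁ c₂ L) ^ N * μ.real A := by
  induction N with
  | zero => intro s _ A _; simpa using measureReal_mono Set.inter_subset_left
  | succ N ih =>
    intro s hs A hA
    set B := A ∩ noVisit X s (L + 1)
    have hB : MeasurableSet[ℱ (s + (L + 1))] B :=
      (ℱ.mono (Nat.le_add_right _ _) _ hA).inter (measurableSet_noVisit hX hs _)
    have hdescent : μ.real B ≤ (1 - descentProb c₁ c₂ L) * μ.real A := by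
      refine hD.measureReal_inter_noVisit_le hX (fun t ht ω => (hXm t ht ω).1) hc₁ hc₁' hc₂ L hs hA
        fun ω _ => lt_of_le_of_lt ?_ hL
      gcongr
      exact_mod_cast (hXm s hs ω).2
    have hcover : A ∩ noVisit X s ((N + 1) * (L + 1)) ⊆ B ∩ noVisit X (s + (L + 1)) (N * (L + 1)) :=
      fun ω ⟨hωA, hω⟩ => ⟨⟨hωA, noVisit_subset_noVisit le_rfl (by nlinarith) hω⟩,
        noVisit_subset_noVisit (Nat.le_add_right _ _) (by nlinarith) hω⟩
    calc μ.real (A ∩ noVisit X s ((N + 1) * (L + 1)))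
        ≤ μ.real (B ∩ noVisit X (s + (L + 1)) (N * (L + 1))) := measureReal_mono hcover
      _ ≤ (1 - descentProb c₁ c₂ L) ^ N * μ.real B := ih (by omega) hB
      _ ≤ (1 - descentProb c₁ c₂ L) ^ N * ((1 - descentProb c₁ c₂ L) * μ.real A) :=
          mul_le_mul_of_nonneg_left hdescent
            (pow_nonneg (sub_nonneg.2 (descentProb_le_one hc₁.le hc₁' hc₂ L)) _)
      _ = (1 - descentProb c₁ c₂ L) ^ (N + 1) * μ.real A := by ring

end Drift

theorem exists_window_length {c₁ c₂ : ℝ} (hc₁ : 0 < c₁) (hc₁' : c₁ < 1) (hc₂ : 0 < c₂) :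
    ∃ K > 0, ∀ m : ℕ, 3 ≤ m → ∃ L N : ℕ, ((N * (L + 1) : ℕ) : ℝ) ≤ K * log m ^ 2 ∧
      (m : ℝ) * c₁ ^ L < 2 ∧ (1 - descentProb c₁ c₂ L) ^ N ≤ (m : ℝ) ^ (-(4 : ℝ)) := by
  have hη1 : (2 : ℝ) ^ (-c₂) < 1 := rpow_lt_one_of_one_lt_of_neg one_lt_two (by linarith)
  have hρ1 : c₁ ^ c₂ < 1 := rpow_lt_one hc₁.le hc₁' hc₂
  set δ := exp (-(2 ^ (-c₂) / ((1 - c₁ ^ c₂) * (1 - 2 ^ (-c₂)))))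
  have hδ (L : ℕ) : δ ≤ descentProb c₁ c₂ L :=
    exp_neg_le_prod_one_sub_mul_pow (by positivity) hη1 (by positivity) hρ1 L
  have hδ1 : δ < 1 := exp_lt_one_iff.2 (neg_lt_zero.2
    (div_pos (by positivity) (mul_pos (sub_pos.2 hρ1) (sub_pos.2 hη1))))
  obtain ⟨C₁, hC₁, hL⟩ := exists_pow_le_exp_neg_mul hc₁ hc₁' zero_le_one
  obtain ⟨C₂, hC₂, hN⟩ :=
    exists_pow_le_exp_neg_mul (sub_pos.2 hδ1) (sub_lt_self _ (exp_pos _)) zero_le_four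
  refine ⟨C₂ * (C₁ + 1), by positivity, fun m hm => ?_⟩
  have hm0 : (0 : ℝ) < m := by positivity
  have hℓ : 1 ≤ log m := by
    have h3 : (3 : ℝ) ≤ m := by exact_mod_cast hm
    rw [le_log_iff_exp_le hm0]
    linarith [exp_one_lt_three]
  obtain ⟨L, hLℓ, hcL⟩ := hL (log m) hℓ
  obtain ⟨N, hNℓ, hδN⟩ := hN (log m) hℓ
  refine ⟨L, N, ?_, ?_, ?_⟩
  · push_cast
    calc (N : ℝ) * (L + 1) ≤ (C₂ * log m) * ((C₁ + 1) * log m) :=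
          mul_le_mul hNℓ (by nlinarith) (by positivity) (by positivity)
      _ = _ := by ring
  · rw [one_mul, exp_neg, exp_log hm0] at hcL
    calc (m : ℝ) * c₁ ^ L ≤ m * (m : ℝ)⁻¹ := by gcongr
      _ < 2 := by rw [mul_inv_cancel₀ hm0.ne']; norm_num
  · calc (1 - descentProb c₁ c₂ L) ^ N ≤ (1 - δ) ^ N :=
          pow_le_pow_left₀ (sub_nonneg.2 (descentProb_le_one hc₁.le hc₁'.le hc₂.le L))
            (by linarith [hδ L]) N
      _ ≤ exp (-(4 * log m)) := hδN
      _ = (m : ℝ) ^ (-(4 : ℝ)) := by rw [rpow_def_of_pos hm0]; ring_nf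

theorem repeated_visits_bound_general (c₁ c₂ : ℝ) (hc₁ : 0 < c₁) (hc₁' : c₁ < 1)
    (hc₂ : 0 < c₂) :
    ∃ K : ℝ, 0 < K ∧ ∃ m₀ : ℕ, ∀ k : ℕ, 1 ≤ k → ∀ m : ℕ, m₀ ≤ m →
      ∀ {Ω : Type} [inst : MeasurableSpace Ω] (μ : Measure Ω)
        [IsProbabilityMeasure μ] (ℱ : Filtration ℕ inst) (X : ℕ → Ω → ℕ),
        (∀ t : ℕ, 1 ≤ t → ∀ ω : Ω, 1 ≤ X t ω ∧ X t ω ≤ m) →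
        (∀ t : ℕ, 1 ≤ t → Measurable[ℱ t] (X t)) →
        (∀ t : ℕ, 1 ≤ t → ∀ᵐ ω ∂μ, 1 < X t ω →
          1 - (X t ω : ℝ) ^ (-c₂) ≤
            (μ[Set.indicator {ω' : Ω | (X (t + 1) ω' : ℝ) ≤ c₁ * (X t ω' : ℝ)}
                (fun _ => (1 : ℝ)) | ℱ t]) ω) →
        ENNReal.ofReal (1 - (k : ℝ) * (m : ℝ) ^ (-(4 : ℝ))) ≤
          μ {ω : Ω | k ≤
              ((Finset.Icc 1 ⌊K * (k : ℝ) * Real.log m ^ 2⌋₊).filter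
                (fun t => X t ω = 1)).card} := by
  obtain ⟨K, hK, hwindow⟩ := exists_window_length hc₁ hc₁' hc₂
  refine ⟨K, hK, 3, fun k _ m hm Ω _ μ _ ℱ X hXm hX hdrift => ?_⟩
  obtain ⟨L, N, hDK, hL, hN⟩ := hwindow m hm
  set D := N * (L + 1)
  have hnoVisit (s : ℕ) (hs : 1 ≤ s) : μ.real (noVisit X s D) ≤ (m : ℝ) ^ (-(4 : ℝ)) := by
    have := HasMultiplicativeDrift.measureReal_inter_noVisit_le_pow hdrift hX hXm hc₁ hc₁'.le
      hc₂.le hL N hs MeasurableSet.univ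
    simp only [Set.univ_inter, probReal_univ, mul_one] at this
    exact this.trans hN
  have hkD : k * D ≤ ⌊K * k * log m ^ 2⌋₊ :=
    Nat.le_floor (by push_cast; nlinarith [(Nat.cast_nonneg k : (0 : ℝ) ≤ k)])
  have hcover : {ω | k ≤ ((Icc 1 ⌊K * k * log m ^ 2⌋₊).filter (fun t => X t ω = 1)).card}ᶜ ⊆
      ⋃ j ∈ range k, noVisit X (1 + j * D) D := by
    intro ω hω
    simp only [Set.mem_iUnion, mem_range, exists_prop]
    by_contra! hvisits
    refine hω ((le_card_filter_Ico_of_forall_exists (a := 1) (D := D) fun j hj => ?_).trans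
      (card_le_card (filter_subset_filter _ fun u hu => ?_)))
    · simpa [noVisit, and_assoc] using hvisits j hj
    · simp only [mem_Ico, mem_Icc] at hu ⊢
      omega
  refine ofReal_one_sub_le_of_measureReal_compl_le ?_
  calc _ ≤ μ.real (⋃ j ∈ range k, noVisit X (1 + j * D) D) :=
        measureReal_mono hcover (measure_ne_top _ _)
    _ ≤ ∑ j ∈ range k, μ.real (noVisit X (1 + j * D) D) := measureReal_biUnion_finset_le _ _
    _ ≤ ∑ j ∈ range k, (m : ℝ) ^ (-(4 : ℝ)) := sum_le_sum fun j _ => hnoVisit _ (by omega)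
    _ = k * (m : ℝ) ^ (-(4 : ℝ)) := by simp

/-- **Repeated visits to the bottom state.** Let `m ≥ 2` and let
`(X_t)_{t≥1}` be a process with values in `{1, …, m}`, adapted to a filtration
`(ℱ_t)`, such that for constants `c₁, c₂ ∈ (0,1)` and every `t ≥ 1`, almost
surely `Pr[X_{t+1} ≤ c₁·X_t | ℱ_t] ≥ 1 − X_t^(−c₂)` on the event `{X_t > 1}`
(after each visit to the state `1` the process may move arbitrarily).  Then
there is a constant `K` (depending only on `c₁, c₂`) such that for every
positive integer `k` and all sufficiently large `m`, with probability at
least `1 − k·m^(−4)` the process visits the state `1` at least `k` times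
within the first `K·k·(log m)²` steps. -/
theorem repeated_visits_bound (c₁ c₂ : ℝ) (hc₁ : 0 < c₁) (hc₁' : c₁ < 1)
    (hc₂ : 0 < c₂) (hc₂' : c₂ < 1) :
    ∃ K : ℝ, 0 < K ∧ ∃ m₀ : ℕ, ∀ k : ℕ, 1 ≤ k → ∀ m : ℕ, m₀ ≤ m →
      ∀ {Ω : Type} [inst : MeasurableSpace Ω] (μ : Measure Ω)
        [IsProbabilityMeasure μ] (ℱ : Filtration ℕ inst) (X : ℕ → Ω → ℕ),
        (∀ t : ℕ, 1 ≤ t → ∀ ω : Ω, 1 ≤ X t ω ∧ X t ω ≤ m) →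
        (∀ t : ℕ, 1 ≤ t → Measurable[ℱ t] (X t)) →
        (∀ t : ℕ, 1 ≤ t → ∀ᵐ ω ∂μ, 1 < X t ω →
          1 - (X t ω : ℝ) ^ (-c₂) ≤
            (μ[Set.indicator {ω' : Ω | (X (t + 1) ω' : ℝ) ≤ c₁ * (X t ω' : ℝ)}
                (fun _ => (1 : ℝ)) | ℱ t]) ω) →
        ENNReal.ofReal (1 - (k : ℝ) * (m : ℝ) ^ (-(4 : ℝ))) ≤
          μ {ω : Ω | k ≤
              ((Finset.Icc 1 ⌊K * (k : ℝ) * Real.log m ^ 2⌋₊).filter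
                (fun t => X t ω = 1)).card} :=
  repeated_visits_bound_general c₁ c₂ hc₁ hc₁' hc₂
end

section
/- In the static placement model with C = 1: for every constant δ > 0 there exist constants p ∈ (0,1) and n₀ such that for all n ≥ n₀ the following holds. Condition on any realization of the infected nodes' cell choices in which at least δ·n cells of attractiveness 2 contain no infected node. Then each susceptible node independently remains uninfected in the round with probability at least p; consequently, if β > 0 is a constant and |U| ≥ n^β, then with probability at least 1 − exp(−Ω(n^β)) at least (p/2)·|U| susceptible nodes remain uninfected after the round. -/
open scoped Classical
open Finset

/-- Probability that a single node chooses cell `v`: proportional to the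
attractiveness `a v`. -/
noncomputable def cellProb {N : ℕ} (a : Fin N → ℕ) (v : Fin N) : ℝ :=
  (a v : ℝ) / ∑ w : Fin N, (a w : ℝ)

/-- Probability of an event `E` about the (independent) cell choices of the
`n` nodes in one round. -/
noncomputable def roundProb (n : ℕ) {N : ℕ} (a : Fin N → ℕ)
    (E : Set (Fin n → Fin N)) : ℝ :=
  ∑ f : Fin n → Fin N, E.indicator (fun g => ∏ i : Fin n, cellProb a (g i)) f

/-- Expectation of a random variable `X` of the cell choices of the `n`
nodes in one round. -/
noncomputable def roundExp (n : ℕ) {N : ℕ} (a : Fin N → ℕ)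
    (X : (Fin n → Fin N) → ℝ) : ℝ :=
  ∑ f : Fin n → Fin N, (∏ i : Fin n, cellProb a (f i)) * X f

/-- The static placement model: `N = ⌈C·n⌉` cells, each with an integer
attractiveness in `[2, (C·n)^(1/α)]`, such that the number of cells of
attractiveness `d` is between `c₁·C·n/d^α` and `c₂·C·n/d^α`. -/
structure PlacementModel (C α c₁ c₂ : ℝ) (n N : ℕ) (a : Fin N → ℕ) : Prop where
  hC : 1 ≤ C
  hα : 2 < α
  hc₁ : 0 < c₁
  hc₁₂ : c₁ ≤ c₂
  hn : 0 < n
  hN : N = ⌈C * (n : ℝ)⌉₊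
  ha_lb : ∀ v, 2 ≤ a v
  ha_ub : ∀ v, (a v : ℝ) ≤ (C * (n : ℝ)) ^ (1 / α)
  hcount_lb : ∀ d : ℕ, 2 ≤ d → (d : ℝ) ≤ (C * (n : ℝ)) ^ (1 / α) →
    c₁ * C * (n : ℝ) / (d : ℝ) ^ α ≤
      ((Finset.univ.filter (fun v => a v = d)).card : ℝ)
  hcount_ub : ∀ d : ℕ, 2 ≤ d → (d : ℝ) ≤ (C * (n : ℝ)) ^ (1 / α) →
    ((Finset.univ.filter (fun v => a v = d)).card : ℝ) ≤
      c₂ * C * (n : ℝ) / (d : ℝ) ^ α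


/-!
Every cell has attractiveness at least `2`, and the power-law bound on the number of cells of
each attractiveness `d` caps the total attractiveness by `c₂ · n · ∑ d ^ (1 - α)`, a constant
multiple of `n` because `α > 2`. So the `δ n` free cells of attractiveness `2` alone are chosen
with probability at least a constant `p`. The nodes choose independently, so for the number `X`
of surviving susceptible nodes `E[e^{-X}] = (1 - (1 - e⁻¹) q) ^ |U| ≤ e^{-(1 - e⁻¹) p |U|}`, and
Markov's inequality for `e^{-X}` gives `P(X < p |U| / 2) ≤ e^{-(1/2 - e⁻¹) p |U|}`.
-/

open Real

section ChernoffLowerTail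

variable {Ω ι κ : Type*} [Fintype Ω] [Fintype ι] [DecidableEq ι] [Fintype κ]

theorem one_sub_exp_mul_sum_le_sum_indicator_le (w : Ω → ℝ) (hw : ∀ f, 0 ≤ w f)
    (hw_sum : ∑ f, w f = 1) (X : Ω → ℝ) (A : ℝ) {t : ℝ} (ht : 0 ≤ t) :
    1 - exp (t * A) * ∑ f, w f * exp (-(t * X f)) ≤ ∑ f, {f | A ≤ X f}.indicator w f := by
  rw [← hw_sum, mul_sum, ← sum_sub_distrib]
  refine sum_le_sum fun f _ => ?_
  have hexp : 0 ≤ exp (t * A) * (w f * exp (-(t * X f))) := by have := hw f; positivity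
  by_cases hf : A ≤ X f
  · rw [Set.indicator_of_mem (show f ∈ {f | A ≤ X f} from hf)]
    linarith
  · rw [Set.indicator_of_notMem (show f ∉ {f | A ≤ X f} from hf)]
    have hge : 1 ≤ exp (t * A) * exp (-(t * X f)) := by
      rw [← exp_add]
      exact one_le_exp (by nlinarith)
    nlinarith [hw f]

theorem sum_prod_mul_exp_neg_card_filter (μ : κ → ℝ) (hμ : ∑ v, μ v = 1) (P : κ → Prop)
    [DecidablePred P] (U : Finset ι) (t : ℝ) :
    ∑ f : ι → κ, (∏ i, μ (f i)) * exp (-(t * #(U.filter fun u => P (f u)))) =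
      (1 - (1 - exp (-t)) * ∑ v ∈ univ.filter P, μ v) ^ #U := by
  set g : ι → κ → ℝ := fun i v => if i ∈ U then exp (-(t * if P v then 1 else 0)) else 1
  have hfactor : ∀ f : ι → κ, exp (-(t * #(U.filter fun u => P (f u)))) = ∏ i, g i (f i) := by
    intro f
    simp only [g, Fintype.prod_extend_by_one, card_filter, ← exp_sum]
    push_cast
    rw [mul_sum, sum_neg_distrib]
  have hsum : ∑ v, μ v * exp (-(t * if P v then 1 else 0)) =
      1 - (1 - exp (-t)) * ∑ v ∈ univ.filter P, μ v := by
    calc ∑ v, μ v * exp (-(t * if P v then 1 else 0))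
        = ∑ v, (μ v - (1 - exp (-t)) * if P v then μ v else 0) :=
          sum_congr rfl fun v _ => by
            split_ifs
            · rw [mul_one]; ring
            · simp
      _ = _ := by rw [sum_sub_distrib, hμ, ← mul_sum, sum_filter]
  calc ∑ f : ι → κ, (∏ i, μ (f i)) * exp (-(t * #(U.filter fun u => P (f u))))
      = ∑ f : ι → κ, ∏ i, μ (f i) * g i (f i) := by simp_rw [hfactor, prod_mul_distrib]
    _ = ∏ i, ∑ v, μ v * g i v := by rw [Fintype.prod_sum]
    _ = ∏ i, if i ∈ U then 1 - (1 - exp (-t)) * ∑ v ∈ univ.filter P, μ v else 1 :=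
        prod_congr rfl fun i _ => by by_cases hi : i ∈ U <;> simp only [g, hi, if_true,
          if_false, mul_one, hsum, hμ]
    _ = _ := by rw [Fintype.prod_extend_by_one, prod_const]

theorem one_sub_exp_le_sum_indicator_half_mul_card_le (μ : κ → ℝ) (hμ_nonneg : ∀ v, 0 ≤ μ v)
    (hμ : ∑ v, μ v = 1) (P : κ → Prop) [DecidablePred P] (U : Finset ι) {p : ℝ}
    (hp : p ≤ ∑ v ∈ univ.filter P, μ v) :
    1 - exp (-((1 / 2 - exp (-1)) * p * #U)) ≤
      ∑ f : ι → κ, {f : ι → κ | p / 2 * #U ≤ #(U.filter fun u => P (f u))}.indicator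
        (fun g => ∏ i, μ (g i)) f := by
  set q := ∑ v ∈ univ.filter P, μ v
  have hq_le : q ≤ 1 := hμ ▸ sum_le_univ_sum_of_nonneg hμ_nonneg
  have hexp_le : exp (-1) ≤ 1 := exp_le_one_iff.mpr (by norm_num)
  have hbase : 1 - (1 - exp (-1)) * q ≤ exp (-((1 - exp (-1)) * p)) :=
    (one_sub_le_exp_neg _).trans' (by nlinarith)
  have hmoment : (1 - (1 - exp (-1)) * q) ^ #U ≤ exp (-((1 - exp (-1)) * p * #U)) := by
    rw [show -((1 - exp (-1)) * p * #U) = #U * -((1 - exp (-1)) * p) by ring, exp_nat_mul]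
    exact pow_le_pow_left₀ (by nlinarith [exp_pos (-1)]) hbase _
  have hmarkov := one_sub_exp_mul_sum_le_sum_indicator_le (fun g : ι → κ => ∏ i, μ (g i))
    (fun g => prod_nonneg fun i _ => hμ_nonneg (g i)) (by rw [← Fintype.prod_sum]; simp [hμ])
    (fun f => (#(U.filter fun u => P (f u)) : ℝ)) (p / 2 * #U) zero_le_one
  beta_reduce at hmarkov
  rw [sum_prod_mul_exp_neg_card_filter μ hμ P U, one_mul] at hmarkov
  refine hmarkov.trans' (sub_le_sub_left ?_ 1)
  calc exp (p / 2 * #U) * (1 - (1 - exp (-1)) * q) ^ #U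
      ≤ exp (p / 2 * #U) * exp (-((1 - exp (-1)) * p * #U)) := by gcongr
    _ = exp (-((1 / 2 - exp (-1)) * p * #U)) := by rw [← exp_add]; congr 1; ring

end ChernoffLowerTail

theorem one_le_tsum_nat_rpow {s : ℝ} (hs : s < -1) : 1 ≤ ∑' d : ℕ, (d : ℝ) ^ s := by
  simpa using (summable_nat_rpow.mpr hs).sum_le_tsum {1} fun d _ => by positivity

section CellProb

variable {N : ℕ} (a : Fin N → ℕ)

theorem cellProb_nonneg (v : Fin N) : 0 ≤ cellProb a v := by
  unfold cellProb
  positivity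

theorem sum_cellProb_eq_one (h : 0 < ∑ w, (a w : ℝ)) : ∑ v, cellProb a v = 1 := by
  simp only [cellProb, ← sum_div, div_self h.ne']

theorem natCast_mul_card_filter_div_le_sum_cellProb (d : ℕ) (P : Fin N → Prop)
    [DecidablePred P] :
    d * #(univ.filter fun v => a v = d ∧ P v) / ∑ w, (a w : ℝ) ≤
      ∑ v ∈ univ.filter P, cellProb a v :=
  calc d * #(univ.filter fun v => a v = d ∧ P v) / ∑ w, (a w : ℝ)
      = ∑ v ∈ univ.filter (fun v => a v = d ∧ P v), (d : ℝ) / ∑ w, (a w : ℝ) := by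
        rw [sum_const, nsmul_eq_mul]
        ring
    _ = ∑ v ∈ univ.filter (fun v => a v = d ∧ P v), cellProb a v :=
        sum_congr rfl fun v hv => by rw [cellProb, (mem_filter.mp hv).2.1]
    _ ≤ ∑ v ∈ univ.filter P, cellProb a v :=
        sum_le_sum_of_subset_of_nonneg (monotone_filter_right _ fun _ _ => And.right)
          fun v _ _ => cellProb_nonneg a v

end CellProb

namespace PlacementModel

variable {C α c₁ c₂ : ℝ} {n N : ℕ} {a : Fin N → ℕ}

theorem sum_attractiveness_pos (h : PlacementModel C α c₁ c₂ n N a) :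
    0 < ∑ w, (a w : ℝ) := by
  have hN : 0 < N := by
    rw [h.hN, Nat.ceil_pos]
    exact mul_pos (one_pos.trans_le h.hC) (Nat.cast_pos.mpr h.hn)
  have : Nonempty (Fin N) := ⟨⟨0, hN⟩⟩
  exact sum_pos (fun w _ => by have := h.ha_lb w; positivity) univ_nonempty

theorem sum_attractiveness_le (h : PlacementModel C α c₁ c₂ n N a) :
    ∑ w, (a w : ℝ) ≤ c₂ * C * n * ∑' d : ℕ, (d : ℝ) ^ (1 - α) := by
  have hscale : 0 ≤ c₂ * C * n := by
    have := h.hc₁.trans_le h.hc₁₂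
    have := h.hC
    positivity
  have hterm : ∀ d ∈ univ.image a,
      #(univ.filter fun v => a v = d) • (d : ℝ) ≤ c₂ * C * n * (d : ℝ) ^ (1 - α) := by
    intro d hd
    obtain ⟨v, -, rfl⟩ := mem_image.mp hd
    have hd : (0 : ℝ) < a v := by have := h.ha_lb v; positivity
    calc #(univ.filter fun w => a w = a v) • (a v : ℝ)
        ≤ c₂ * C * n / (a v : ℝ) ^ α * (a v : ℝ) := by
          rw [nsmul_eq_mul]
          exact mul_le_mul_of_nonneg_right (h.hcount_ub _ (h.ha_lb v) (h.ha_ub v)) hd.le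
      _ = c₂ * C * n * (a v : ℝ) ^ (1 - α) := by
          rw [rpow_sub hd, rpow_one]
          ring
  calc ∑ w, (a w : ℝ) = ∑ d ∈ univ.image a, #(univ.filter fun v => a v = d) • (d : ℝ) :=
        sum_comp _ _
    _ ≤ ∑ d ∈ univ.image a, c₂ * C * n * (d : ℝ) ^ (1 - α) := sum_le_sum hterm
    _ ≤ c₂ * C * n * ∑' d : ℕ, (d : ℝ) ^ (1 - α) := by
        rw [← mul_sum]
        exact mul_le_mul_of_nonneg_left ((summable_nat_rpow.mpr (by linarith [h.hα])).sum_le_tsum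
          _ fun d _ => by positivity) hscale

theorem div_le_sum_cellProb (h : PlacementModel C α c₁ c₂ n N a) {δ : ℝ} (hδ : 0 ≤ δ)
    (P : Fin N → Prop) [DecidablePred P] (hP : δ * n ≤ #(univ.filter fun v => a v = 2 ∧ P v)) :
    2 * δ / (c₂ * C * ∑' d : ℕ, (d : ℝ) ^ (1 - α)) ≤ ∑ v ∈ univ.filter P, cellProb a v := by
  have hT := h.sum_attractiveness_pos
  have hTle := h.sum_attractiveness_le
  have hS := one_le_tsum_nat_rpow (show 1 - α < -1 by linarith [h.hα])
  have hn : (0 : ℝ) < n := Nat.cast_pos.mpr h.hn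
  have hscale : 0 < c₂ * C * ∑' d : ℕ, (d : ℝ) ^ (1 - α) :=
    mul_pos (mul_pos (h.hc₁.trans_le h.hc₁₂) (one_pos.trans_le h.hC)) (one_pos.trans_le hS)
  calc 2 * δ / (c₂ * C * ∑' d : ℕ, (d : ℝ) ^ (1 - α))
      = 2 * (δ * n) / (c₂ * C * n * ∑' d : ℕ, (d : ℝ) ^ (1 - α)) := by field_simp
    _ ≤ 2 * (δ * n) / ∑ w, (a w : ℝ) := by gcongr
    _ ≤ (2 : ℕ) * #(univ.filter fun v => a v = 2 ∧ P v) / ∑ w, (a w : ℝ) := by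
        rw [Nat.cast_ofNat]
        gcongr
    _ ≤ _ := natCast_mul_card_filter_div_le_sum_cellProb a 2 P

end PlacementModel

theorem survive_round_general (α c₁ c₂ : ℝ) (hα : 2 < α) (hc₁ : 0 < c₁)
    (hc₁₂ : c₁ ≤ c₂) (δ β : ℝ) (hδ : 0 < δ) :
    ∃ p : ℝ, 0 < p ∧ p < 1 ∧ ∃ c : ℝ, 0 < c ∧ ∃ n₀ : ℕ, ∀ n : ℕ, n₀ ≤ n →
      ∀ (N : ℕ) (a : Fin N → ℕ), PlacementModel 1 α c₁ c₂ n N a →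
        ∀ I U R : Finset (Fin n),
          Disjoint I U → Disjoint I R → Disjoint U R → I ∪ U ∪ R = Finset.univ →
          ∀ fI : Fin n → Fin N,
            δ * (n : ℝ) ≤ ((Finset.univ.filter (fun v : Fin N =>
                a v = 2 ∧ ∀ i ∈ I, fI i ≠ v)).card : ℝ) →
            (∀ u ∈ U,
              p ≤ ∑ v ∈ Finset.univ.filter (fun v : Fin N => ∀ i ∈ I, fI i ≠ v),
                    cellProb a v) ∧
            ((n : ℝ) ^ β ≤ (U.card : ℝ) →
              1 - Real.exp (-c * (n : ℝ) ^ β) ≤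
                roundProb n a {f |
                  (p / 2) * (U.card : ℝ) ≤
                    ((U.filter (fun u => ∀ i ∈ I, fI i ≠ f u)).card : ℝ)}) := by
  have hS := one_le_tsum_nat_rpow (show 1 - α < -1 by linarith)
  set p := min (2 * δ / (c₂ * 1 * ∑' d : ℕ, (d : ℝ) ^ (1 - α))) (1 / 2)
  have hp : 0 < p :=
    lt_min (div_pos (by positivity) (by nlinarith [hc₁.trans_le hc₁₂])) one_half_pos
  have hc : 0 < (1 / 2 - exp (-1)) * p := mul_pos (sub_pos.mpr exp_neg_one_lt_half) hp
  refine ⟨p, hp, (min_le_right _ _).trans_lt one_half_lt_one, _, hc, 0, ?_⟩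
  intro n _ N a hmodel I U R _ _ _ _ fI hfree
  have hmass : p ≤ ∑ v ∈ univ.filter (fun v => ∀ i ∈ I, fI i ≠ v), cellProb a v :=
    (min_le_left _ _).trans (hmodel.div_le_sum_cellProb hδ.le _ hfree)
  refine ⟨fun _ _ => hmass, fun hU => ?_⟩
  calc 1 - exp (-((1 / 2 - exp (-1)) * p) * n ^ β)
      ≤ 1 - exp (-((1 / 2 - exp (-1)) * p * #U)) := by
        gcongr
        linarith [mul_le_mul_of_nonneg_left hU hc.le]
    _ ≤ _ := by
      unfold roundProb
      exact one_sub_exp_le_sum_indicator_half_mul_card_le (cellProb a) (cellProb_nonneg a)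
        (sum_cellProb_eq_one a hmodel.sum_attractiveness_pos) (fun v => ∀ i ∈ I, fI i ≠ v) U hmass

/-- In the static placement model with `C = 1`: for every constant `δ > 0`
(and every constant `β > 0`) there are constants `p ∈ (0,1)`, `c > 0` and `n₀`
such that for all `n ≥ n₀` the following holds.  Condition on any realization
`fI` of the infected nodes' cell choices in which at least `δ·n` cells of
attractiveness `2` contain no infected node.  Then each susceptible node
independently remains uninfected in the round with probability at least `p`;
consequently, if `|U| ≥ n^β`, then with probability at least
`1 − exp(−Ω(n^β))` at least `(p/2)·|U|` susceptible nodes remain uninfected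
after the round. -/
theorem survive_round (α c₁ c₂ : ℝ) (hα : 2 < α) (hc₁ : 0 < c₁)
    (hc₁₂ : c₁ ≤ c₂) (δ β : ℝ) (hδ : 0 < δ) (hβ : 0 < β) :
    ∃ p : ℝ, 0 < p ∧ p < 1 ∧ ∃ c : ℝ, 0 < c ∧ ∃ n₀ : ℕ, ∀ n : ℕ, n₀ ≤ n →
      ∀ (N : ℕ) (a : Fin N → ℕ), PlacementModel 1 α c₁ c₂ n N a →
        ∀ I U R : Finset (Fin n),
          Disjoint I U → Disjoint I R → Disjoint U R → I ∪ U ∪ R = Finset.univ →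
          ∀ fI : Fin n → Fin N,
            δ * (n : ℝ) ≤ ((Finset.univ.filter (fun v : Fin N =>
                a v = 2 ∧ ∀ i ∈ I, fI i ≠ v)).card : ℝ) →
            (∀ u ∈ U,
              p ≤ ∑ v ∈ Finset.univ.filter (fun v : Fin N => ∀ i ∈ I, fI i ≠ v),
                    cellProb a v) ∧
            ((n : ℝ) ^ β ≤ (U.card : ℝ) →
              1 - Real.exp (-c * (n : ℝ) ^ β) ≤
                roundProb n a {f |
                  (p / 2) * (U.card : ℝ) ≤
                    ((U.filter (fun u => ∀ i ∈ I, fI i ≠ f u)).card : ℝ)}) :=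
  survive_round_general α c₁ c₂ hα hc₁ hc₁₂ δ β hδ
end
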